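/- If 𝐀 is a non-negative operator on X × Y, (R, H) is a square root of 𝐀, and (S, G) is a square root of its shorted operator 𝒮(𝐀), then ran S* = ran R* ∩ Y' (identifying Y' with {0} × Y' ⊆ X' × Y'). -/

import Mathlib

/-!
Let `P` be the orthogonal projection onto the orthogonal complement `K` of `R (X × {0})`.
By the characterization of the shorted operator, `(S w w).re` is the squared distance from `R w`
to `R (X × {0})`, which is `‖P (R w)‖²`. Hence `‖Q w‖ = ‖P (R w)‖` for all `w`, and Douglas' lemma
(a Hahn–Banach extension followed by Riesz representation), applied in both directions, gives
`ran Q* = ran (P R)*`. Finally `(P R)* h = R* (P h)`, and `R* h` vanishes on `X × {0}` exactly when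
`h ∈ K`.
-/

open scoped ComplexOrder ComplexConjugate
open Complex

noncomputable section

/-- For a linear map `R : V → H` into a Hilbert space, `adjMap R : H → V'` is the
operator `R*`, sending `h` to the antilinear functional `v ↦ (h | R v)`
(in Mathlib's convention, `v ↦ ⟪R v, h⟫`). -/
def adjMap {V H : Type*} [AddCommGroup V] [Module ℂ V]
    [NormedAddCommGroup H] [InnerProductSpace ℂ H] (R : V →ₗ[ℂ] H) :
    H →ₗ[ℂ] (V →ₗ⋆[ℂ] ℂ) where
  toFun h :=
    { toFun := fun v => @inner ℂ _ _ (R v) h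
      map_add' := fun v w => by simp [inner_add_left]
      map_smul' := fun c v => by simp [inner_smul_left]; ring }
  map_add' h₁ h₂ := by ext v; simp [inner_add_right]
  map_smul' c h := by ext v; simp [inner_smul_right]

/-- For `B : Y → X'`, the operator `B~ := B'↾X : X → Y'`, `(B~ x) y = conj (⟨B y, x⟩)`. -/
def Btilde {X Y : Type*} [AddCommGroup X] [Module ℂ X] [AddCommGroup Y] [Module ℂ Y]
    (B : Y →ₗ[ℂ] (X →ₗ⋆[ℂ] ℂ)) : X →ₗ[ℂ] (Y →ₗ⋆[ℂ] ℂ) where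
  toFun x :=
    { toFun := fun y => conj (B y x)
      map_add' := fun y₁ y₂ => by simp
      map_smul' := fun c y => by simp }
  map_add' x₁ x₂ := by ext y; simp
  map_smul' c x := by ext y; simp

section Dual

variable {𝕜 V G : Type*} [RCLike 𝕜] [AddCommGroup V] [Module 𝕜 V]
  [NormedAddCommGroup G] [NormedSpace 𝕜 G]

lemma exists_strongDual_comp_eq_of_norm_le (B : V →ₗ[𝕜] G) (ψ : V →ₗ[𝕜] 𝕜) (c : ℝ)
    (hψ : ∀ v, ‖ψ v‖ ≤ c * ‖B v‖) : ∃ Φ : StrongDual 𝕜 G, ∀ v, Φ (B v) = ψ v := by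
  have hker : LinearMap.ker B ≤ LinearMap.ker ψ := fun v hv => by
    have := hψ v
    rw [LinearMap.mem_ker.mp hv, norm_zero, mul_zero] at this
    exact LinearMap.mem_ker.mpr (norm_le_zero_iff.mp this)
  set φ : LinearMap.range B →ₗ[𝕜] 𝕜 :=
    (LinearMap.ker B).liftQ ψ hker ∘ₗ B.quotKerEquivRange.symm.toLinearMap
  have hφ : ∀ v, φ ⟨B v, LinearMap.mem_range_self B v⟩ = ψ v := fun v => by
    simp [φ, B.quotKerEquivRange_symm_apply_image]
  have hφc : ∀ u : LinearMap.range B, ‖φ u‖ ≤ c * ‖u‖ := by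
    rintro ⟨_, v, rfl⟩
    exact (hφ v).symm ▸ hψ v
  obtain ⟨Φ, hΦ, -⟩ := exists_extension_norm_eq _ (φ.mkContinuous c hφc)
  exact ⟨Φ, fun v => (hΦ ⟨B v, LinearMap.mem_range_self B v⟩).trans (hφ v)⟩

end Dual

section Adjoint

variable {V H G : Type*} [AddCommGroup V] [Module ℂ V]
  [NormedAddCommGroup H] [InnerProductSpace ℂ H] [NormedAddCommGroup G] [InnerProductSpace ℂ G]

lemma adjMap_apply (R : V →ₗ[ℂ] H) (h : H) (v : V) : adjMap R h v = inner ℂ (R v) h := rfl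

lemma re_adjMap_apply_self (R : V →ₗ[ℂ] H) (v : V) : (adjMap R (R v) v).re = ‖R v‖ ^ 2 :=
  inner_self_eq_norm_sq (𝕜 := ℂ) (R v)

lemma range_adjMap_subset_of_norm_le [CompleteSpace G] (A : V →ₗ[ℂ] H) (B : V →ₗ[ℂ] G) (c : ℝ)
    (hAB : ∀ v, ‖A v‖ ≤ c * ‖B v‖) : Set.range (adjMap A) ⊆ Set.range (adjMap B) := by
  rintro _ ⟨h, rfl⟩
  obtain ⟨Φ, hΦ⟩ := exists_strongDual_comp_eq_of_norm_le B ((innerSL ℂ h).toLinearMap ∘ₗ A)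
    (‖h‖ * c) fun v => calc
      ‖inner ℂ h (A v)‖ ≤ ‖h‖ * ‖A v‖ := norm_inner_le_norm h (A v)
      _ ≤ ‖h‖ * (c * ‖B v‖) := by gcongr; exact hAB v
      _ = ‖h‖ * c * ‖B v‖ := (mul_assoc _ _ _).symm
  refine ⟨(InnerProductSpace.toDual ℂ G).symm Φ, LinearMap.ext fun v => ?_⟩
  rw [adjMap_apply, adjMap_apply, ← inner_conj_symm, InnerProductSpace.toDual_symm_apply, hΦ,
    LinearMap.comp_apply, ContinuousLinearMap.coe_coe, innerSL_apply_apply, inner_conj_symm]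

end Adjoint

section Projection

variable {𝕜 E H : Type*} [RCLike 𝕜] [AddCommGroup E] [Module 𝕜 E]
  [NormedAddCommGroup H] [InnerProductSpace 𝕜 H] [CompleteSpace H]

lemma isGLB_norm_sub_sq_range (L : E →ₗ[𝕜] H) (x : H) :
    IsGLB (Set.range fun e => ‖x - L e‖ ^ 2)
      (‖(LinearMap.range L)ᗮ.starProjection x‖ ^ 2) := by
  set U := LinearMap.range L
  set f : H → ℝ := fun y => ‖x - y‖ ^ 2
  refine isGLB_of_mem_closure ?_ ?_
  · rintro _ ⟨e, rfl⟩
    have hLe : Uᗮ.starProjection (L e) = 0 :=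
      (Uᗮ.starProjection_apply_eq_zero_iff).mpr (U.le_orthogonal_orthogonal ⟨e, rfl⟩)
    have := Uᗮ.norm_starProjection_apply_le (x - L e)
    rw [map_sub, hLe, sub_zero] at this
    exact pow_le_pow_left₀ (norm_nonneg _) this 2
  · have hmem : x - Uᗮ.starProjection x ∈ closure (U : Set H) := by
      rw [← Submodule.topologicalClosure_coe, ← U.orthogonal_orthogonal_eq_closure]
      exact Submodule.sub_starProjection_mem_orthogonal x
    have hrange : (Set.range fun e => ‖x - L e‖ ^ 2) = f '' U := by
      rw [LinearMap.coe_range, ← Set.range_comp]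
      rfl
    rw [hrange]
    simpa [f] using image_closure_subset_closure_image (by fun_prop : Continuous f) ⟨_, hmem, rfl⟩

end Projection

section Shorting

variable {E V H : Type*} [AddCommGroup E] [Module ℂ E] [AddCommGroup V] [Module ℂ V]
  [NormedAddCommGroup H] [InnerProductSpace ℂ H]

lemma adjMap_starProjection_comp (K : Submodule ℂ H) [K.HasOrthogonalProjection]
    (R : V →ₗ[ℂ] H) (h : H) :
    adjMap (K.starProjection.toLinearMap ∘ₗ R) h = adjMap R (K.starProjection h) :=
  LinearMap.ext fun v => K.inner_starProjection_left_eq_right (R v) h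

lemma adjMap_apply_comp_eq_zero_iff (R : V →ₗ[ℂ] H) (L : E →ₗ[ℂ] V) (h : H) :
    (∀ e, adjMap R h (L e) = 0) ↔ h ∈ (LinearMap.range (R ∘ₗ L))ᗮ := by
  simp [Submodule.mem_orthogonal, adjMap_apply]

theorem range_adjMap_starProjection_comp [CompleteSpace H] (R : V →ₗ[ℂ] H) (L : E →ₗ[ℂ] V) :
    Set.range (adjMap ((LinearMap.range (R ∘ₗ L))ᗮ.starProjection.toLinearMap ∘ₗ R)) =
      {f | f ∈ Set.range (adjMap R) ∧ ∀ e, f (L e) = 0} := by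
  set K := (LinearMap.range (R ∘ₗ L))ᗮ
  ext f
  simp only [Set.mem_range, Set.mem_ofPred_eq, adjMap_starProjection_comp]
  constructor
  · rintro ⟨h, rfl⟩
    exact ⟨⟨_, rfl⟩, (adjMap_apply_comp_eq_zero_iff R L _).mpr (K.starProjection_apply_mem h)⟩
  · rintro ⟨⟨h, rfl⟩, hL⟩
    exact ⟨h, by rw [K.starProjection_eq_self_iff.mpr ((adjMap_apply_comp_eq_zero_iff R L h).mp hL)]⟩

end Shorting

theorem schur_stmt12_general {X Y H G : Type} [AddCommGroup X] [Module ℂ X]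
    [AddCommGroup Y] [Module ℂ Y]
    [NormedAddCommGroup H] [InnerProductSpace ℂ H] [CompleteSpace H]
    [NormedAddCommGroup G] [InnerProductSpace ℂ G] [CompleteSpace G]
    (R : (X × Y) →ₗ[ℂ] H)
    (S : (X × Y) →ₗ[ℂ] ((X × Y) →ₗ⋆[ℂ] ℂ))
    (hSchar : ∀ w : X × Y,
      IsGLB (Set.range fun z : X =>
          ((adjMap R (R (w - (z, 0)))) (w - (z, 0))).re) ((S w w).re))
    (Q : (X × Y) →ₗ[ℂ] G) (hQ : ∀ w, S w = adjMap Q (Q w)) :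
    Set.range (adjMap Q) =
      {f : (X × Y) →ₗ⋆[ℂ] ℂ |
        f ∈ Set.range (adjMap R) ∧ ∀ x : X, f (x, 0) = 0} := by
  set K := (LinearMap.range (R ∘ₗ LinearMap.inl ℂ X Y))ᗮ
  have hnorm : ∀ w, ‖Q w‖ = ‖K.starProjection (R w)‖ := by
    intro w
    have hS := hSchar w
    simp only [re_adjMap_apply_self, hQ] at hS
    simp only [map_sub] at hS
    exact (sq_eq_sq₀ (norm_nonneg _) (norm_nonneg _)).mp
      (hS.unique (isGLB_norm_sub_sq_range (R ∘ₗ LinearMap.inl ℂ X Y) (R w)))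
  calc Set.range (adjMap Q) = Set.range (adjMap (K.starProjection.toLinearMap ∘ₗ R)) :=
        (range_adjMap_subset_of_norm_le _ _ 1 fun w => by simp [hnorm w]).antisymm
          (range_adjMap_subset_of_norm_le _ _ 1 fun w => by simp [hnorm w])
    _ = _ := range_adjMap_starProjection_comp R (LinearMap.inl ℂ X Y)

theorem schur_stmt12 {X Y H G : Type} [AddCommGroup X] [Module ℂ X]
    [AddCommGroup Y] [Module ℂ Y]
    [NormedAddCommGroup H] [InnerProductSpace ℂ H] [CompleteSpace H]
    [NormedAddCommGroup G] [InnerProductSpace ℂ G] [CompleteSpace G]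
    (R : (X × Y) →ₗ[ℂ] H)
    (S : (X × Y) →ₗ[ℂ] ((X × Y) →ₗ⋆[ℂ] ℂ))
    (hSh : ∀ w₁ w₂, S w₁ w₂ = conj (S w₂ w₁))
    (hSchar : ∀ w : X × Y,
      IsGLB (Set.range fun z : X =>
          ((adjMap R (R (w - (z, 0)))) (w - (z, 0))).re) ((S w w).re))
    (Q : (X × Y) →ₗ[ℂ] G) (hQ : ∀ w, S w = adjMap Q (Q w)) :
    Set.range (adjMap Q) =
      {f : (X × Y) →ₗ⋆[ℂ] ℂ |
        f ∈ Set.range (adjMap R) ∧ ∀ x : X, f (x, 0) = 0} :=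
  schur_stmt12_general R S hSchar Q hQ
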